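/- Any mechanism mapping utility profiles to maximizers of the Nash bargaining program is 2-incentive compatible: if profiles u and û differ only in agent l's utilities, x maximizes Π_i u_i·x_i and y maximizes Π_i û_i·y_i over fractional perfect matchings, then u_l·y_l ≤ 2·u_l·x_l. -/

import Mathlib

/-!
Optimality of the Nash product at `x`, tested along the segment from `x` towards `y`, gives the
first-order condition `∑ i, (u_i·y_i / u_i·x_i - 1) ≤ 0`; symmetrically `∑ i, (û_i·x_i / û_i·y_i - 1) ≤ 0`.
Adding the two, the terms of every agent `i ≠ l` have the form `a/b + b/a - 2 ≥ 0`, and the term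
`û_l·x_l / û_l·y_l` is nonnegative, so `u_l·y_l / u_l·x_l ≤ 2`.
-/

def isPM {n : ℕ} (x : Fin n → Fin n → ℝ) : Prop :=
  (∀ i j, 0 ≤ x i j) ∧ (∀ i, ∑ j, x i j = 1) ∧ (∀ j, ∑ i, x i j = 1)

def util {n : ℕ} (u x : Fin n → Fin n → ℝ) (i : Fin n) : ℝ := ∑ j, u i j * x i j

open Finset Set

theorem HasDerivWithinAt.nonpos_of_isMaxOn_Icc {g : ℝ → ℝ} {a b g' : ℝ} (hab : a < b)
    (hg : HasDerivWithinAt g g' (Icc a b) a) (hmax : IsMaxOn g (Icc a b) a) : g' ≤ 0 := by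
  have hcone : b - a ∈ posTangentConeAt (Icc a b) a :=
    sub_mem_posTangentConeAt_of_segment_subset (segment_eq_Icc hab.le).subset
  have := hmax.localize.hasFDerivWithinAt_nonpos hg.hasFDerivWithinAt hcone
  rw [ContinuousLinearMap.toSpanSingleton_apply, smul_eq_mul] at this
  exact nonpos_of_mul_nonpos_right this (sub_pos.2 hab)

theorem two_le_div_add_div {a b : ℝ} (ha : 0 < a) (hb : 0 < b) : 2 ≤ a / b + b / a := by
  rw [div_add_div _ _ hb.ne' ha.ne', le_div_iff₀ (mul_pos hb ha)]
  nlinarith [sq_nonneg (a - b)]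

theorem sum_div_sub_one_nonpos_of_prod_le {ι : Type*} [Fintype ι] {a b : ι → ℝ}
    (ha : ∀ i, 0 < a i)
    (hmax : ∀ ε ∈ Icc (0 : ℝ) 1, ∏ i, ((1 - ε) * a i + ε * b i) ≤ ∏ i, a i) :
    ∑ i, (b i / a i - 1) ≤ 0 := by
  classical
  set c : ι → ℝ := fun i => b i / a i - 1
  set g : ℝ → ℝ := fun ε => ∏ i, (1 + ε * c i)
  have hmix : ∀ ε, ∏ i, ((1 - ε) * a i + ε * b i) = (∏ i, a i) * g ε := by
    intro ε
    rw [← prod_mul_distrib]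
    refine prod_congr rfl fun i _ => ?_
    simp only [c]
    field_simp [(ha i).ne']
    ring
  have hderiv : HasDerivAt g (∑ i, c i) 0 := by
    have := HasDerivAt.fun_finsetProd (u := univ) (x := 0)
      (fun i _ => ((hasDerivAt_id (0 : ℝ)).mul_const (c i)).const_add 1)
    simpa using this
  refine hderiv.hasDerivWithinAt.nonpos_of_isMaxOn_Icc zero_lt_one fun ε hε => ?_
  have hle : (∏ i, a i) * g ε ≤ (∏ i, a i) * g 0 := by
    simpa [g, ← hmix] using hmax ε hε
  exact le_of_mul_le_mul_left hle (prod_pos fun i _ => ha i)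

theorem convex_setOf_isPM (n : ℕ) : Convex ℝ {x : Fin n → Fin n → ℝ | isPM x} := by
  rintro x ⟨hx₀, hx_row, hx_col⟩ y ⟨hy₀, hy_row, hy_col⟩ a b ha hb hab
  refine ⟨fun i j => ?_, fun i => ?_, fun j => ?_⟩
  · simp only [Pi.add_apply, Pi.smul_apply, smul_eq_mul]
    exact add_nonneg (mul_nonneg ha (hx₀ i j)) (mul_nonneg hb (hy₀ i j))
  · simp [sum_add_distrib, ← mul_sum, hx_row i, hy_row i, hab]
  · simp [sum_add_distrib, ← mul_sum, hx_col j, hy_col j, hab]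

theorem util_add_smul {n : ℕ} (u x y : Fin n → Fin n → ℝ) (a b : ℝ) (i : Fin n) :
    util u (a • x + b • y) i = a * util u x i + b * util u y i := by
  simp only [util, Pi.add_apply, Pi.smul_apply, smul_eq_mul, mul_sum, ← sum_add_distrib]
  exact sum_congr rfl fun j _ => by ring

theorem isPM.sum_util_div_sub_one_nonpos {n : ℕ} {u x y : Fin n → Fin n → ℝ}
    (hx : isPM x) (hy : isPM y) (hpos : ∀ i, 0 < util u x i)
    (hmax : ∀ z, isPM z → ∏ i, util u z i ≤ ∏ i, util u x i) :
    ∑ i, (util u y i / util u x i - 1) ≤ 0 :=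
  sum_div_sub_one_nonpos_of_prod_le hpos fun ε hε => by
    simpa only [util_add_smul] using
      hmax _ (convex_setOf_isPM n hx hy (sub_nonneg.2 hε.2) hε.1 (sub_add_cancel 1 ε))

theorem nash_two_ic_general {n : ℕ} (u uhat : Fin n → Fin n → ℝ)
    (huhat : ∀ i j, 0 ≤ uhat i j)
    (l : Fin n) (hdiff : ∀ i, i ≠ l → uhat i = u i)
    (x y : Fin n → Fin n → ℝ) (hx : isPM x) (hy : isPM y)
    (hposx : ∀ i, 0 < util u x i) (hposy : ∀ i, 0 < util uhat y i)
    (hmaxx : ∀ z, isPM z → ∏ i, util u z i ≤ ∏ i, util u x i)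
    (hmaxy : ∀ z, isPM z → ∏ i, util uhat z i ≤ ∏ i, util uhat y i) :
    util u y l ≤ 2 * util u x l := by
  set f : Fin n → ℝ := fun i =>
    (util u y i / util u x i - 1) + (util uhat x i / util uhat y i - 1)
  have hsum : ∑ i, f i ≤ 0 := by
    rw [sum_add_distrib]
    linarith [hx.sum_util_div_sub_one_nonpos hy hposx hmaxx,
      hy.sum_util_div_sub_one_nonpos hx hposy hmaxy]
  have hothers : ∀ i ∈ univ.erase l, 0 ≤ f i := fun i hi => by
    have hrow : ∀ z, util uhat z i = util u z i := fun z => by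
      simp only [util, hdiff i (ne_of_mem_erase hi)]
    have hyi : 0 < util u y i := hrow y ▸ hposy i
    have := two_le_div_add_div (hposx i) hyi
    simp only [f, hrow]
    linarith
  have hfl : f l ≤ 0 := by
    linarith [add_sum_erase univ f (mem_univ l), sum_nonneg hothers]
  have hxl := hposx l
  have hBl : 0 ≤ util uhat x l / util uhat y l :=
    div_nonneg (sum_nonneg fun j _ => mul_nonneg (huhat l j) (hx.1 l j)) (hposy l).le
  have hAl : util u y l / util u x l ≤ 2 := by linarith
  rwa [div_le_iff₀ hxl] at hAl

/-- any mechanism outputting maximizers of the Nash bargaining program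
is 2-incentive compatible: if profiles u and û differ only in agent l, x maximizes
the Nash product under u and y under û, then u_l·y_l ≤ 2·u_l·x_l. -/
theorem nash_two_ic {n : ℕ} (u uhat : Fin n → Fin n → ℝ)
    (hu : ∀ i j, 0 ≤ u i j) (huhat : ∀ i j, 0 ≤ uhat i j)
    (l : Fin n) (hdiff : ∀ i, i ≠ l → uhat i = u i)
    (x y : Fin n → Fin n → ℝ) (hx : isPM x) (hy : isPM y)
    (hposx : ∀ i, 0 < util u x i) (hposy : ∀ i, 0 < util uhat y i)
    (hmaxx : ∀ z, isPM z → ∏ i, util u z i ≤ ∏ i, util u x i)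
    (hmaxy : ∀ z, isPM z → ∏ i, util uhat z i ≤ ∏ i, util uhat y i) :
    util u y l ≤ 2 * util u x l :=
  nash_two_ic_general u uhat huhat l hdiff x y hx hy hposx hposy hmaxx hmaxy
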